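/- arXiv:1310.0887 — 3 statements merged into one kernel-verified Lean document; each statement's English description precedes it below -/
import Mathlib

section
/- Let Ω ⊆ ℝ^d be open, let β : ℝ^d → ℝ^d be continuously differentiable with div β(x) ≤ 0 for all x ∈ Ω, let ψ : ℝ^d → ℝ be continuously differentiable, let b₀ > 0 with ⟨β(x), ∇ψ(x)⟩ ≥ b₀ for all x ∈ Ω, let χ ≥ 0, and set φ(x) = exp(−ψ(x)) + χ. Then for every continuously differentiable u : ℝ^d → ℝ whose support is compact and contained in Ω, ∫_{ℝ^d} φ(x)·u(x)·⟨β(x), ∇u(x)⟩ dx ≥ (b₀/2)·∫_{ℝ^d} exp(−ψ(x))·u(x)² dx. -/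
/-!
With `h = φ u² / 2` one has `φ u ⟨β, ∇u⟩ = ⟨β, ∇h⟩ - (u² / 2) ⟨β, ∇φ⟩`. Integrating `⟨β, ∇h⟩` by
parts coordinatewise gives `∫ φ u ⟨β, ∇u⟩ = -½ ∫ div (φ β) u²`, and
`div (φ β) = φ div β - e^{-ψ} ⟨β, ∇ψ⟩ ≤ -b₀ e^{-ψ}` on `Ω` because `φ ≥ 0`, while `u` vanishes
off `Ω`.
-/

open MeasureTheory
open scoped RealInnerProductSpace

/-- The divergence of a vector field on `ℝ^d`, defined as the trace of its
(Fréchet) derivative. -/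
noncomputable def vecDiv {d : ℕ}
    (β : EuclideanSpace ℝ (Fin d) → EuclideanSpace ℝ (Fin d))
    (x : EuclideanSpace ℝ (Fin d)) : ℝ :=
  LinearMap.trace ℝ (EuclideanSpace ℝ (Fin d)) (fderiv ℝ β x : _ →ₗ[ℝ] _)

lemma fderiv_mul_sq_div_two_apply {E : Type*} [NormedAddCommGroup E] [NormedSpace ℝ E]
    {φ u : E → ℝ} {x : E} (hφ : DifferentiableAt ℝ φ x) (hu : DifferentiableAt ℝ u x) (v : E) :
    fderiv ℝ (fun y => φ y * u y ^ 2 / 2) x v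
      = φ x * u x * fderiv ℝ u x v + fderiv ℝ φ x v * u x ^ 2 / 2 := by
  simp_rw [div_eq_mul_inv]
  rw [((hφ.hasFDerivAt.fun_mul (hu.hasFDerivAt.pow 2)).mul_const (2⁻¹ : ℝ)).fderiv]
  simp
  ring

lemma fderiv_exp_neg_add_const_apply {E : Type*} [NormedAddCommGroup E] [NormedSpace ℝ E]
    {ψ : E → ℝ} {x : E} (hψ : DifferentiableAt ℝ ψ x) (χ : ℝ) (v : E) :
    fderiv ℝ (fun y => Real.exp (-ψ y) + χ) x v = -(Real.exp (-ψ x) * fderiv ℝ ψ x v) := by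
  rw [(hψ.hasFDerivAt.fun_neg.exp.add_const χ).fderiv]
  simp

lemma real_inner_gradient_right {E : Type*} [NormedAddCommGroup E] [InnerProductSpace ℝ E]
    [CompleteSpace E] (f : E → ℝ) (x v : E) : ⟪v, gradient f x⟫ = fderiv ℝ f x v := by
  simp [inner_gradient_right]

lemma fderiv_inner_const_left_apply {E F : Type*} [NormedAddCommGroup E] [NormedSpace ℝ E]
    [NormedAddCommGroup F] [InnerProductSpace ℝ F] {f : E → F} {x : E}
    (hf : DifferentiableAt ℝ f x) (w : F) (v : E) :
    fderiv ℝ (fun y => ⟪w, f y⟫) x v = ⟪w, fderiv ℝ f x v⟫ := by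
  rw [fderiv_inner_apply ℝ (differentiableAt_const w) hf]
  simp

section Divergence

variable {d : ℕ} {μ : Measure (EuclideanSpace ℝ (Fin d))} [μ.IsAddHaarMeasure]
  {β : EuclideanSpace ℝ (Fin d) → EuclideanSpace ℝ (Fin d)}

lemma vecDiv_eq_sum_inner {ι : Type*} [Fintype ι]
    (b : OrthonormalBasis ι ℝ (EuclideanSpace ℝ (Fin d))) (x : EuclideanSpace ℝ (Fin d)) :
    vecDiv β x = ∑ i, ⟪b i, fderiv ℝ β x (b i)⟫ :=
  LinearMap.trace_eq_sum_inner _ b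

lemma continuous_vecDiv (hβ : ContDiff ℝ 1 β) : Continuous (vecDiv β) := by
  simp_rw [funext (vecDiv_eq_sum_inner (β := β) (EuclideanSpace.basisFun (Fin d) ℝ))]
  have hdβ_cont := hβ.continuous_fderiv one_ne_zero
  fun_prop

theorem integral_fderiv_apply_eq_neg_integral_vecDiv_mul (hβ : ContDiff ℝ 1 β)
    {h : EuclideanSpace ℝ (Fin d) → ℝ} (hh : ContDiff ℝ 1 h) (hh_supp : HasCompactSupport h) :
    ∫ x, fderiv ℝ h x (β x) ∂μ = -∫ x, vecDiv β x * h x ∂μ := by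
  set b := EuclideanSpace.basisFun (Fin d) ℝ
  have hcoeff : ∀ i, ContDiff ℝ 1 (fun y => ⟪b i, β y⟫) := fun i => contDiff_const.inner ℝ hβ
  have hdh : Continuous (fderiv ℝ h) := hh.continuous_fderiv one_ne_zero
  have hexpand : ∀ x, fderiv ℝ h x (β x) = ∑ i, ⟪b i, β x⟫ * fderiv ℝ h x (b i) := by
    intro x
    conv_lhs => rw [← b.sum_repr' (β x)]
    simp [map_sum]
  have hint_left : ∀ i, Integrable (fun x => ⟪b i, β x⟫ * fderiv ℝ h x (b i)) μ := fun i =>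
    ((hcoeff i).continuous.mul (hdh.clm_apply continuous_const)).integrable_of_hasCompactSupport
      (hh_supp.fderiv_apply ℝ (b i)).mul_left
  have hint_right : ∀ i, Integrable (fun x => fderiv ℝ (fun y => ⟪b i, β y⟫) x (b i) * h x) μ :=
    fun i => ((((hcoeff i).continuous_fderiv one_ne_zero).clm_apply continuous_const).mul
      hh.continuous).integrable_of_hasCompactSupport hh_supp.mul_left
  have hparts : ∀ i, ∫ x, ⟪b i, β x⟫ * fderiv ℝ h x (b i) ∂μ
      = -∫ x, fderiv ℝ (fun y => ⟪b i, β y⟫) x (b i) * h x ∂μ := fun i =>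
    integral_mul_fderiv_eq_neg_fderiv_mul_of_integrable (hint_right i) (hint_left i)
      (((hcoeff i).continuous.mul hh.continuous).integrable_of_hasCompactSupport
        hh_supp.mul_left)
      (fun x _ => (hcoeff i).differentiable one_ne_zero x)
      (fun x _ => hh.differentiable one_ne_zero x)
  have hdiv : ∀ x, vecDiv β x * h x = ∑ i, fderiv ℝ (fun y => ⟪b i, β y⟫) x (b i) * h x := by
    intro x
    simp_rw [vecDiv_eq_sum_inner b, Finset.sum_mul,
      fderiv_inner_const_left_apply (hβ.differentiable one_ne_zero x)]
  simp_rw [hexpand, hdiv]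
  rw [integral_finsetSum _ fun i _ => hint_left i, integral_finsetSum _ fun i _ => hint_right i,
    ← Finset.sum_neg_distrib]
  exact Finset.sum_congr rfl fun i _ => hparts i

theorem integral_weight_mul_mul_fderiv_apply_eq (hβ : ContDiff ℝ 1 β)
    {φ u : EuclideanSpace ℝ (Fin d) → ℝ} (hφ : ContDiff ℝ 1 φ) (hu : ContDiff ℝ 1 u)
    (hu_supp : HasCompactSupport u) :
    ∫ x, φ x * u x * fderiv ℝ u x (β x) ∂μ
      = -∫ x, (vecDiv β x * φ x + fderiv ℝ φ x (β x)) * u x ^ 2 / 2 ∂μ := by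
  set h := fun y => φ y * u y ^ 2 / 2
  have hh : ContDiff ℝ 1 h := (hφ.mul (hu.pow 2)).div_const 2
  have hh_supp : HasCompactSupport h :=
    hu_supp.mono fun x hx hux => hx (by simp [h, hux])
  have hint_dh : Integrable (fun x => fderiv ℝ h x (β x)) μ :=
    ((hh.continuous_fderiv one_ne_zero).clm_apply hβ.continuous).integrable_of_hasCompactSupport
      ((hh_supp.fderiv ℝ).mono fun x hx h0 => hx (by simp [h0]))
  have hint_dφ : Integrable (fun x => fderiv ℝ φ x (β x) * u x ^ 2 / 2) μ :=
    ((((hφ.continuous_fderiv one_ne_zero).clm_apply hβ.continuous).mul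
      (hu.continuous.pow 2)).div_const 2).integrable_of_hasCompactSupport
      (hu_supp.mono fun x hx hux => hx (by simp [hux]))
  have hint_div : Integrable (fun x => vecDiv β x * h x) μ :=
    ((continuous_vecDiv hβ).mul hh.continuous).integrable_of_hasCompactSupport hh_supp.mul_left
  have hpointwise : ∀ x, φ x * u x * fderiv ℝ u x (β x)
      = fderiv ℝ h x (β x) - fderiv ℝ φ x (β x) * u x ^ 2 / 2 := fun x => by
    rw [fderiv_mul_sq_div_two_apply (hφ.differentiable one_ne_zero x)
      (hu.differentiable one_ne_zero x)]
    ring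
  calc ∫ x, φ x * u x * fderiv ℝ u x (β x) ∂μ
      = ∫ x, fderiv ℝ h x (β x) ∂μ - ∫ x, fderiv ℝ φ x (β x) * u x ^ 2 / 2 ∂μ := by
        simp_rw [hpointwise]; exact integral_sub hint_dh hint_dφ
    _ = -(∫ x, vecDiv β x * h x ∂μ + ∫ x, fderiv ℝ φ x (β x) * u x ^ 2 / 2 ∂μ) := by
        rw [integral_fderiv_apply_eq_neg_integral_vecDiv_mul hβ hh hh_supp]; ring
    _ = -∫ x, (vecDiv β x * φ x + fderiv ℝ φ x (β x)) * u x ^ 2 / 2 ∂μ := by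
        rw [← integral_add hint_div hint_dφ]
        congr 2 with x
        simp only [h]
        ring

end Divergence

theorem weighted_convection_coercivity_general {d : ℕ}
    (Ω : Set (EuclideanSpace ℝ (Fin d)))
    (β : EuclideanSpace ℝ (Fin d) → EuclideanSpace ℝ (Fin d))
    (hβ : ContDiff ℝ 1 β) (hdivβ : ∀ x ∈ Ω, vecDiv β x ≤ 0)
    (ψ : EuclideanSpace ℝ (Fin d) → ℝ) (hψ : ContDiff ℝ 1 ψ)
    (b₀ : ℝ)
    (hβψ : ∀ x ∈ Ω, b₀ ≤ ⟪β x, gradient ψ x⟫)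
    (χ : ℝ) (hχ : 0 ≤ χ)
    (u : EuclideanSpace ℝ (Fin d) → ℝ) (hu : ContDiff ℝ 1 u)
    (hucs : HasCompactSupport u) (husupp : tsupport u ⊆ Ω) :
    (b₀ / 2) * ∫ x, Real.exp (-ψ x) * (u x) ^ 2 ≤
      ∫ x, (Real.exp (-ψ x) + χ) * u x * ⟪β x, gradient u x⟫ := by
  have hφ : ContDiff ℝ 1 (fun y => Real.exp (-ψ y) + χ) := by fun_prop
  simp_rw [real_inner_gradient_right u]
  rw [integral_weight_mul_mul_fderiv_apply_eq hβ hφ hu hucs, ← integral_neg,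
    ← integral_const_mul]
  refine integral_mono ?_ ?_ fun x => ?_
  · exact (by fun_prop : Continuous _).integrable_of_hasCompactSupport
      (hucs.mono fun x hx hux => hx (by simp [hux]))
  · have hdiv_cont := continuous_vecDiv hβ
    have hdφ_cont := hφ.continuous_fderiv one_ne_zero
    exact (by fun_prop : Continuous _).integrable_of_hasCompactSupport
      (hucs.mono fun x hx hux => hx (by simp [hux]))
  by_cases hx : x ∈ Ω
  · have hdivβx := hdivβ x hx
    have hβψx := hβψ x hx
    rw [fderiv_exp_neg_add_const_apply (hψ.differentiable one_ne_zero x),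
      ← real_inner_gradient_right]
    have hweight : 0 ≤ Real.exp (-ψ x) * u x ^ 2 := by positivity
    have hφu : 0 ≤ (Real.exp (-ψ x) + χ) * u x ^ 2 := by positivity
    nlinarith [mul_le_mul_of_nonneg_left hβψx hweight, mul_nonpos_of_nonneg_of_nonpos hφu hdivβx]
  · simp [image_eq_zero_of_notMem_tsupport (mt (@husupp x) hx)]

/-- Weighted coercivity of the convection term: if `div β ≤ 0` on the open set `Ω`,
`⟨β, ∇ψ⟩ ≥ b₀ > 0` on `Ω`, `χ ≥ 0` and `φ = exp(−ψ) + χ`, then for every `C¹`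
function `u` compactly supported in `Ω`,
`∫ φ·u·⟨β, ∇u⟩ ≥ (b₀/2)·∫ exp(−ψ)·u²`. -/
theorem weighted_convection_coercivity {d : ℕ}
    (Ω : Set (EuclideanSpace ℝ (Fin d))) (hΩ : IsOpen Ω)
    (β : EuclideanSpace ℝ (Fin d) → EuclideanSpace ℝ (Fin d))
    (hβ : ContDiff ℝ 1 β) (hdivβ : ∀ x ∈ Ω, vecDiv β x ≤ 0)
    (ψ : EuclideanSpace ℝ (Fin d) → ℝ) (hψ : ContDiff ℝ 1 ψ)
    (b₀ : ℝ) (hb₀ : 0 < b₀)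
    (hβψ : ∀ x ∈ Ω, b₀ ≤ ⟪β x, gradient ψ x⟫)
    (χ : ℝ) (hχ : 0 ≤ χ)
    (u : EuclideanSpace ℝ (Fin d) → ℝ) (hu : ContDiff ℝ 1 u)
    (hucs : HasCompactSupport u) (husupp : tsupport u ⊆ Ω) :
    (b₀ / 2) * ∫ x, Real.exp (-ψ x) * (u x) ^ 2 ≤
      ∫ x, (Real.exp (-ψ x) + χ) * u x * ⟪β x, gradient u x⟫ :=
  weighted_convection_coercivity_general Ω β hβ hdivβ ψ hψ b₀ hβψ χ hχ u hu hucs husupp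
end

section
/- Let Ω ⊆ ℝ^d be open, let β : ℝ^d → ℝ^d be continuously differentiable with div β(x) ≤ 0 for all x ∈ Ω, let ψ : ℝ^d → ℝ be continuously differentiable, and let b₀ > 0, M ≥ 0, E ≥ 0 be constants with ⟨β(x), ∇ψ(x)⟩ ≥ b₀, ‖∇ψ(x)‖ ≤ M, and exp(−ψ(x)) ≤ E for all x ∈ Ω. Let χ ≥ 1 + 2·b₀⁻¹·E·M² and set φ(x) = exp(−ψ(x)) + χ. Then for every ε with 0 < ε ≤ 1 and every twice continuously differentiable u : ℝ^d → ℝ whose support is compact and contained in Ω, ∫_{ℝ^d} φ(x)·u(x)·( −ε·Δu(x) + ⟨β(x), ∇u(x)⟩ ) dx ≥ (χ/2)·ε·∫_{ℝ^d} ‖∇u(x)‖² dx + (b₀/4)·∫_{ℝ^d} exp(−ψ(x))·u(x)² dx. -/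
open MeasureTheory
open scoped RealInnerProductSpace

/-- The Laplacian `Δu = div (∇u)`. -/
noncomputable def lap {d : ℕ} (u : EuclideanSpace ℝ (Fin d) → ℝ)
    (x : EuclideanSpace ℝ (Fin d)) : ℝ :=
  vecDiv (fun y => gradient u y) x

/-
Testing against `φ u` with `φ = exp (-ψ) + χ` and integrating by parts, the diffusion term
becomes `ε ∫ (φ ‖∇u‖² + u ⟪∇φ, ∇u⟫)` and the convection term becomes `-½ ∫ u² div (φ β)`.
Since `∇φ = -exp (-ψ) ∇ψ` and `div β ≤ 0`, the latter is at least `(b₀ / 2) ∫ exp (-ψ) u²`.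
The only term without a sign, `ε exp (-ψ) u ⟪∇ψ, ∇u⟫`, is split by Young's inequality between
`(χ / 2) ε ‖∇u‖²` and `(b₀ / 4) exp (-ψ) u²`, which is possible because `2 E M² ≤ b₀ χ`.
-/

section

variable {d : ℕ}

local notation "𝔼" => EuclideanSpace ℝ (Fin d)

theorem gradient_fun_mul {f g : 𝔼 → ℝ} {x : 𝔼} (hf : DifferentiableAt ℝ f x)
    (hg : DifferentiableAt ℝ g x) :
    gradient (fun y => f y * g y) x = f x • gradient g x + g x • gradient f x := by
  simp [gradient, fderiv_fun_mul hf hg]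

theorem gradient_sq_div_two {u : 𝔼 → ℝ} {x : 𝔼} (hu : DifferentiableAt ℝ u x) :
    gradient (fun y => u y ^ 2 / 2) x = u x • gradient u x := by
  have h : (fun y => u y ^ 2 / 2) = fun y => (2 : ℝ)⁻¹ * (u y * u y) := by
    funext y
    ring
  rw [h, gradient_fun_mul (differentiableAt_const _) (hu.fun_mul hu), gradient_fun_mul hu hu,
    gradient_fun_const]
  module

theorem gradient_exp_neg_add_const {ψ : 𝔼 → ℝ} {x : 𝔼} (hψ : DifferentiableAt ℝ ψ x) (c : ℝ) :
    gradient (fun y => Real.exp (-ψ y) + c) x = -Real.exp (-ψ x) • gradient ψ x := by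
  have h : HasFDerivAt (fun y => Real.exp (-ψ y)) (Real.exp (-ψ x) • -fderiv ℝ ψ x) x :=
    hψ.hasFDerivAt.neg.exp
  simp [gradient, fderiv_add_const, h.fderiv]

theorem gradient_of_notMem_tsupport {f : 𝔼 → ℝ} {x : 𝔼} (hx : x ∉ tsupport f) :
    gradient f x = 0 := by
  simp [gradient, fderiv_of_notMem_tsupport ℝ hx]

theorem hasCompactSupport_gradient {f : 𝔼 → ℝ} (hf : HasCompactSupport f) :
    HasCompactSupport (gradient f) :=
  (hf.fderiv ℝ).comp_left (map_zero _)

theorem contDiff_gradient {n : WithTop ℕ∞} {f : 𝔼 → ℝ} (hf : ContDiff ℝ (n + 1) f) :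
    ContDiff ℝ n (gradient f) :=
  (InnerProductSpace.toDual ℝ 𝔼).symm.toContinuousLinearEquiv.contDiff.comp
    (hf.fderiv_right le_rfl)

theorem ContDiff.continuous_gradient {f : 𝔼 → ℝ} (hf : ContDiff ℝ 1 f) :
    Continuous (gradient f) :=
  (contDiff_gradient (n := 0) (by simpa using hf)).continuous

theorem ContDiff.continuous_vecDiv {V : 𝔼 → 𝔼} (hV : ContDiff ℝ 1 V) :
    Continuous (vecDiv V) :=
  ((LinearMap.trace ℝ 𝔼).comp (ContinuousLinearMap.coeLM ℝ)).continuous_of_finiteDimensional.comp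
    (hV.continuous_fderiv one_ne_zero)

theorem vecDiv_fun_smul {φ : 𝔼 → ℝ} {V : 𝔼 → 𝔼} {x : 𝔼} (hφ : DifferentiableAt ℝ φ x)
    (hV : DifferentiableAt ℝ V x) :
    vecDiv (fun y => φ y • V y) x = ⟪gradient φ x, V x⟫ + φ x * vecDiv V x := by
  simp [vecDiv, fderiv_fun_smul hφ hV, inner_gradient_left, add_comm]

theorem vecDiv_eq_sum_fderiv_apply {V : 𝔼 → 𝔼} {x : 𝔼} (hV : DifferentiableAt ℝ V x) :
    vecDiv V x = ∑ i, fderiv ℝ (fun y => V y i) x (EuclideanSpace.single i 1) := by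
  rw [vecDiv, LinearMap.trace_eq_sum_inner _ (EuclideanSpace.basisFun (Fin d) ℝ)]
  refine Finset.sum_congr rfl fun i _ => ?_
  have hVi : HasFDerivAt (fun y => V y i) ((EuclideanSpace.proj i).comp (fderiv ℝ V x)) x :=
    (EuclideanSpace.proj i : 𝔼 →L[ℝ] ℝ).hasFDerivAt.comp x hV.hasFDerivAt
  simp [hVi.fderiv, EuclideanSpace.inner_single_left]

theorem fderiv_apply_eq_sum {f : 𝔼 → ℝ} (x w : 𝔼) :
    fderiv ℝ f x w = ∑ i, fderiv ℝ f x (EuclideanSpace.single i 1) * w i := by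
  conv_lhs => rw [← (EuclideanSpace.basisFun (Fin d) ℝ).sum_repr w]
  simp [mul_comm]

theorem integral_mul_vecDiv_eq_neg_integral_inner_gradient {f : 𝔼 → ℝ} {V : 𝔼 → 𝔼}
    (hf : ContDiff ℝ 1 f) (hfc : HasCompactSupport f) (hV : ContDiff ℝ 1 V) :
    ∫ x, f x * vecDiv V x = -∫ x, ⟪gradient f x, V x⟫ := by
  let e : Fin d → 𝔼 := fun i => EuclideanSpace.single i 1
  have hVi : ∀ i, ContDiff ℝ 1 (fun y => V y i) := fun i =>
    (EuclideanSpace.proj i : 𝔼 →L[ℝ] ℝ).contDiff.comp hV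
  have hf_dV : ∀ i, Integrable (fun x => f x * fderiv ℝ (fun y => V y i) x (e i)) := fun i =>
    (hf.continuous.mul (((hVi i).continuous_fderiv one_ne_zero).clm_apply continuous_const))
      |>.integrable_of_hasCompactSupport hfc.mul_right
  have hdf_V : ∀ i, Integrable (fun x => fderiv ℝ f x (e i) * V x i) := fun i =>
    (((hf.continuous_fderiv one_ne_zero).clm_apply continuous_const).mul (hVi i).continuous)
      |>.integrable_of_hasCompactSupport (hfc.fderiv_apply ℝ (e i)).mul_right
  have hf_V : ∀ i, Integrable (fun x => f x * V x i) := fun i =>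
    (hf.continuous.mul (hVi i).continuous).integrable_of_hasCompactSupport hfc.mul_right
  calc ∫ x, f x * vecDiv V x
      = ∫ x, ∑ i, f x * fderiv ℝ (fun y => V y i) x (e i) := by
        simp only [vecDiv_eq_sum_fderiv_apply (hV.differentiable one_ne_zero _), Finset.mul_sum, e]
    _ = ∑ i, -∫ x, fderiv ℝ f x (e i) * V x i := by
        rw [integral_finsetSum _ fun i _ => hf_dV i]
        exact Finset.sum_congr rfl fun i _ =>
          integral_mul_fderiv_eq_neg_fderiv_mul_of_integrable (hdf_V i) (hf_dV i) (hf_V i)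
            (fun x _ => hf.differentiable one_ne_zero x)
            (fun x _ => (hVi i).differentiable one_ne_zero x)
    _ = -∫ x, ⟪gradient f x, V x⟫ := by
        simp only [inner_gradient_left, fderiv_apply_eq_sum (f := f) _ (V _)]
        rw [integral_finsetSum _ fun i _ => hdf_V i, Finset.sum_neg_distrib]

variable {φ u : EuclideanSpace ℝ (Fin d) → ℝ}
  {β : EuclideanSpace ℝ (Fin d) → EuclideanSpace ℝ (Fin d)}

theorem integral_mul_mul_lap (hφ : ContDiff ℝ 1 φ) (hu : ContDiff ℝ 2 u)
    (huc : HasCompactSupport u) :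
    ∫ x, φ x * u x * lap u x =
      -∫ x, (φ x * ‖gradient u x‖ ^ 2 + u x * ⟪gradient φ x, gradient u x⟫) := by
  have hu1 : ContDiff ℝ 1 u := hu.of_le (by norm_num)
  have h := integral_mul_vecDiv_eq_neg_integral_inner_gradient (hφ.mul hu1) huc.mul_left
    (contDiff_gradient hu)
  refine h.trans (congrArg _ (integral_congr_ae (.of_eq (funext fun x => ?_))))
  rw [gradient_fun_mul (hφ.differentiable one_ne_zero x) (hu1.differentiable one_ne_zero x),
    inner_add_left, real_inner_smul_left, real_inner_smul_left, real_inner_self_eq_norm_sq]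

-- `u ⟪β, ∇u⟫ = ⟪∇(u² / 2), β⟫`, so the convection term is integrated by parts against `φ β`.
theorem integral_mul_mul_inner_gradient (hφ : ContDiff ℝ 1 φ) (hβ : ContDiff ℝ 1 β)
    (hu : ContDiff ℝ 1 u) (huc : HasCompactSupport u) :
    ∫ x, φ x * u x * ⟪β x, gradient u x⟫ =
      -∫ x, u x ^ 2 / 2 * (⟪gradient φ x, β x⟫ + φ x * vecDiv β x) := by
  have h := integral_mul_vecDiv_eq_neg_integral_inner_gradient (V := fun x => φ x • β x)
    ((hu.pow 2).div_const 2) (huc.comp_left (g := fun t : ℝ => t ^ 2 / 2) (by norm_num))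
    (hφ.smul hβ)
  simp only [vecDiv_fun_smul (hφ.differentiable one_ne_zero _) (hβ.differentiable one_ne_zero _),
    gradient_sq_div_two (hu.differentiable one_ne_zero _)] at h
  rw [h, neg_neg]
  refine integral_congr_ae (.of_eq (funext fun x => ?_))
  rw [real_inner_smul_left, real_inner_smul_right, real_inner_comm]
  ring

theorem integrable_norm_gradient_sq (hu : ContDiff ℝ 1 u) (huc : HasCompactSupport u) :
    Integrable fun x => ‖gradient u x‖ ^ 2 := by
  have hc : HasCompactSupport fun x => ‖gradient u x‖ ^ 2 :=
    (hasCompactSupport_gradient huc).comp_left (g := fun v => ‖v‖ ^ 2) (by simp)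
  exact (hu.continuous_gradient.norm.pow 2).integrable_of_hasCompactSupport hc

theorem integrable_diffusion_density (hφ : ContDiff ℝ 1 φ) (hu : ContDiff ℝ 1 u)
    (huc : HasCompactSupport u) :
    Integrable fun x => φ x * ‖gradient u x‖ ^ 2 + u x * ⟪gradient φ x, gradient u x⟫ := by
  have := hφ.continuous
  have := hu.continuous
  have := hφ.continuous_gradient
  have := hu.continuous_gradient
  refine Continuous.integrable_of_hasCompactSupport (by fun_prop) (.add ?_ huc.mul_right)
  exact ((hasCompactSupport_gradient huc).comp_left (g := fun v => ‖v‖ ^ 2) (by simp)).mul_left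

theorem integrable_transport_density (hφ : ContDiff ℝ 1 φ) (hβ : ContDiff ℝ 1 β)
    (hu : Continuous u) (huc : HasCompactSupport u) :
    Integrable fun x => u x ^ 2 / 2 * (⟪gradient φ x, β x⟫ + φ x * vecDiv β x) := by
  have := hφ.continuous
  have := hβ.continuous
  have := hφ.continuous_gradient
  have := hβ.continuous_vecDiv
  exact Continuous.integrable_of_hasCompactSupport (by fun_prop)
    (huc.comp_left (g := fun t : ℝ => t ^ 2 / 2) (by simp)).mul_right

theorem integral_weighted_convection_diffusion (hφ : ContDiff ℝ 1 φ) (hβ : ContDiff ℝ 1 β)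
    (hu : ContDiff ℝ 2 u) (huc : HasCompactSupport u) (ε : ℝ) :
    ∫ x, φ x * u x * (-ε * lap u x + ⟪β x, gradient u x⟫) =
      ∫ x, (ε * (φ x * ‖gradient u x‖ ^ 2 + u x * ⟪gradient φ x, gradient u x⟫)
        - u x ^ 2 / 2 * (⟪gradient φ x, β x⟫ + φ x * vecDiv β x)) := by
  have hu1 : ContDiff ℝ 1 u := hu.of_le (by norm_num)
  have := hφ.continuous
  have := hu.continuous
  have := hβ.continuous
  have := hu1.continuous_gradient
  have : Continuous (lap u) := (contDiff_gradient hu).continuous_vecDiv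
  have h_lap : Integrable fun x => φ x * u x * lap u x :=
    Continuous.integrable_of_hasCompactSupport (by fun_prop) huc.mul_left.mul_right
  have h_conv : Integrable fun x => φ x * u x * ⟪β x, gradient u x⟫ :=
    Continuous.integrable_of_hasCompactSupport (by fun_prop) huc.mul_left.mul_right
  calc ∫ x, φ x * u x * (-ε * lap u x + ⟪β x, gradient u x⟫)
      = -ε * (∫ x, φ x * u x * lap u x) + ∫ x, φ x * u x * ⟪β x, gradient u x⟫ := by
        rw [← integral_const_mul, ← integral_add (h_lap.const_mul _) h_conv]
        congr with x
        ring
    _ = ε * (∫ x, (φ x * ‖gradient u x‖ ^ 2 + u x * ⟪gradient φ x, gradient u x⟫))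
          - ∫ x, u x ^ 2 / 2 * (⟪gradient φ x, β x⟫ + φ x * vecDiv β x) := by
        rw [integral_mul_mul_lap hφ hu huc, integral_mul_mul_inner_gradient hφ hβ hu1 huc]
        ring
    _ = _ := by
        rw [integral_sub ((integrable_diffusion_density hφ hu1 huc).const_mul ε)
          (integrable_transport_density hφ hβ hu.continuous huc), integral_const_mul]

end

theorem convection_diffusion_density_lower_bound {a χ ε b₀ M E N U P B D : ℝ}
    (ha : 0 ≤ a) (haE : a ≤ E) (hχ : 0 < χ) (hEM : 2 * E * M ^ 2 ≤ b₀ * χ)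
    (hε0 : 0 ≤ ε) (hε1 : ε ≤ 1) (hP : |P| ≤ M * N) (hB : b₀ ≤ B) (hD : D ≤ 0) :
    χ / 2 * ε * N ^ 2 + b₀ / 4 * (a * U ^ 2) ≤
      ε * ((a + χ) * N ^ 2 - a * U * P) + U ^ 2 / 2 * (a * B - (a + χ) * D) := by
  have young : ε * a * |U| * (M * N) ≤ χ / 2 * ε * N ^ 2 + b₀ / 4 * (a * U ^ 2) := by
    have hsq : 0 ≤ ε * (χ * N - a * M * |U|) ^ 2 := by positivity
    have hεa : ε * a * (a * M ^ 2 * U ^ 2) ≤ E * (a * M ^ 2 * U ^ 2) :=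
      mul_le_mul_of_nonneg_right ((mul_le_of_le_one_left ha hε1).trans haE) (by positivity)
    have hE : E * M ^ 2 * (a * U ^ 2) ≤ b₀ * χ / 2 * (a * U ^ 2) :=
      mul_le_mul_of_nonneg_right (by linarith) (by positivity)
    refine le_of_mul_le_mul_left ?_ (by positivity : 0 < 2 * χ)
    rw [← sq_abs U] at hεa hE ⊢
    nlinarith
  have cross : U * P ≤ |U| * (M * N) :=
    (le_abs_self _).trans (abs_mul U P ▸ mul_le_mul_of_nonneg_left hP (abs_nonneg U))
  have h_diff : 0 ≤ ε * a * N ^ 2 := by positivity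
  have h_conv : U ^ 2 / 2 * (a * b₀) ≤ U ^ 2 / 2 * (a * B) := by gcongr
  have h_div : 0 ≤ U ^ 2 / 2 * -((a + χ) * D) := mul_nonneg (by positivity) (by nlinarith)
  linarith [mul_le_mul_of_nonneg_left cross (mul_nonneg hε0 ha)]

theorem weighted_convection_diffusion_coercivity_general {d : ℕ}
    (Ω : Set (EuclideanSpace ℝ (Fin d)))
    (β : EuclideanSpace ℝ (Fin d) → EuclideanSpace ℝ (Fin d))
    (hβ : ContDiff ℝ 1 β) (hdivβ : ∀ x ∈ Ω, vecDiv β x ≤ 0)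
    (ψ : EuclideanSpace ℝ (Fin d) → ℝ) (hψ : ContDiff ℝ 1 ψ)
    (b₀ M E : ℝ) (hb₀ : 0 < b₀) (hE : 0 ≤ E)
    (hβψ : ∀ x ∈ Ω, b₀ ≤ ⟪β x, gradient ψ x⟫)
    (hψM : ∀ x ∈ Ω, ‖gradient ψ x‖ ≤ M)
    (hψE : ∀ x ∈ Ω, Real.exp (-ψ x) ≤ E)
    (χ : ℝ) (hχ : 1 + 2 * b₀⁻¹ * E * M ^ 2 ≤ χ)
    (ε : ℝ) (hε0 : 0 < ε) (hε1 : ε ≤ 1)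
    (u : EuclideanSpace ℝ (Fin d) → ℝ) (hu : ContDiff ℝ 2 u)
    (hucs : HasCompactSupport u) (husupp : tsupport u ⊆ Ω) :
    (χ / 2) * ε * (∫ x, ‖gradient u x‖ ^ 2)
      + (b₀ / 4) * ∫ x, Real.exp (-ψ x) * (u x) ^ 2 ≤
    ∫ x, (Real.exp (-ψ x) + χ) * u x * (-ε * lap u x + ⟪β x, gradient u x⟫) := by
  have hu1 : ContDiff ℝ 1 u := hu.of_le (by norm_num)
  have hφ : ContDiff ℝ 1 (fun y => Real.exp (-ψ y) + χ) := hψ.neg.exp.add contDiff_const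
  have hχ0 : 0 < χ := lt_of_lt_of_le (by positivity) hχ
  have hEM : 2 * E * M ^ 2 ≤ b₀ * χ :=
    calc 2 * E * M ^ 2 ≤ b₀ * (1 + 2 * b₀⁻¹ * E * M ^ 2) := by field_simp; linarith
      _ ≤ b₀ * χ := by gcongr
  have h_grad := (integrable_norm_gradient_sq hu1 hucs).const_mul (χ / 2 * ε)
  have h_mass : Integrable fun x => b₀ / 4 * (Real.exp (-ψ x) * u x ^ 2) := by
    have hc : HasCompactSupport fun x => Real.exp (-ψ x) * u x ^ 2 :=
      (hucs.comp_left (g := fun t : ℝ => t ^ 2) (by simp)).mul_left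
    exact ((hψ.continuous.neg.rexp.mul (hu.continuous.pow 2)).integrable_of_hasCompactSupport
      hc).const_mul _
  have h_energy := ((integrable_diffusion_density hφ hu1 hucs).const_mul ε).sub
    (integrable_transport_density hφ hβ hu.continuous hucs)
  rw [integral_weighted_convection_diffusion hφ hβ hu hucs, ← integral_const_mul,
    ← integral_const_mul, ← integral_add h_grad h_mass]
  refine integral_mono (h_grad.add h_mass) h_energy fun x => ?_
  by_cases hx : x ∈ tsupport u
  · have hxΩ := husupp hx
    have hP : |⟪gradient ψ x, gradient u x⟫| ≤ M * ‖gradient u x‖ :=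
      (abs_real_inner_le_norm _ _).trans (mul_le_mul_of_nonneg_right (hψM x hxΩ) (norm_nonneg _))
    simp only [gradient_exp_neg_add_const (hψ.differentiable one_ne_zero x),
      real_inner_smul_left, real_inner_comm (β x) (gradient ψ x)]
    exact (convection_diffusion_density_lower_bound (U := u x) (Real.exp_pos _).le (hψE x hxΩ)
      hχ0 hEM hε0.le hε1 hP (hβψ x hxΩ) (hdivβ x hxΩ)).trans_eq (by ring)
  · simp [image_eq_zero_of_notMem_tsupport hx, gradient_of_notMem_tsupport hx]

/-- ε-uniform weighted coercivity of the convection–diffusion operator `−εΔ + β·∇`: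
under the standing assumptions `div β ≤ 0`, `⟨β, ∇ψ⟩ ≥ b₀ > 0`, `‖∇ψ‖ ≤ M`,
`exp(−ψ) ≤ E` on `Ω`, and with `χ ≥ 1 + 2·b₀⁻¹·E·M²`, `φ = exp(−ψ) + χ`,
for every `0 < ε ≤ 1` and every `C²` function `u` compactly supported in `Ω`,
`∫ φ·u·(−ε·Δu + ⟨β, ∇u⟩) ≥ (χ/2)·ε·∫ ‖∇u‖² + (b₀/4)·∫ exp(−ψ)·u²`. -/
theorem weighted_convection_diffusion_coercivity {d : ℕ}
    (Ω : Set (EuclideanSpace ℝ (Fin d))) (hΩ : IsOpen Ω)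
    (β : EuclideanSpace ℝ (Fin d) → EuclideanSpace ℝ (Fin d))
    (hβ : ContDiff ℝ 1 β) (hdivβ : ∀ x ∈ Ω, vecDiv β x ≤ 0)
    (ψ : EuclideanSpace ℝ (Fin d) → ℝ) (hψ : ContDiff ℝ 1 ψ)
    (b₀ M E : ℝ) (hb₀ : 0 < b₀) (hM : 0 ≤ M) (hE : 0 ≤ E)
    (hβψ : ∀ x ∈ Ω, b₀ ≤ ⟪β x, gradient ψ x⟫)
    (hψM : ∀ x ∈ Ω, ‖gradient ψ x‖ ≤ M)
    (hψE : ∀ x ∈ Ω, Real.exp (-ψ x) ≤ E)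
    (χ : ℝ) (hχ : 1 + 2 * b₀⁻¹ * E * M ^ 2 ≤ χ)
    (ε : ℝ) (hε0 : 0 < ε) (hε1 : ε ≤ 1)
    (u : EuclideanSpace ℝ (Fin d) → ℝ) (hu : ContDiff ℝ 2 u)
    (hucs : HasCompactSupport u) (husupp : tsupport u ⊆ Ω) :
    (χ / 2) * ε * (∫ x, ‖gradient u x‖ ^ 2)
      + (b₀ / 4) * ∫ x, Real.exp (-ψ x) * (u x) ^ 2 ≤
    ∫ x, (Real.exp (-ψ x) + χ) * u x * (-ε * lap u x + ⟪β x, gradient u x⟫) :=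
  weighted_convection_diffusion_coercivity_general Ω β hβ hdivβ ψ hψ b₀ M E hb₀ hE hβψ hψM hψE χ hχ
    ε hε0 hε1 u hu hucs husupp
end

section
/- Let Ω ⊆ ℝ^d be open, let β : ℝ^d → ℝ^d be continuously differentiable with div β(x) ≤ 0 for all x ∈ Ω, let ψ : ℝ^d → ℝ be continuously differentiable, and let b₀ > 0, M ≥ 0, m > 0, E ≥ m be constants with ⟨β(x), ∇ψ(x)⟩ ≥ b₀, ‖∇ψ(x)‖ ≤ M, and m ≤ exp(−ψ(x)) ≤ E for all x ∈ Ω. Then there exists a constant C ≥ 0, depending only on b₀, M, m, E (and in particular independent of ε), such that for every ε with 0 < ε ≤ 1 and every twice continuously differentiable u : ℝ^d → ℝ whose support is compact and contained in Ω, setting f(x) = −ε·Δu(x) + ⟨β(x), ∇u(x)⟩, one has ε·∫_{ℝ^d} ‖∇u(x)‖² dx + ∫_{ℝ^d} u(x)² dx ≤ C·∫_{ℝ^d} f(x)² dx. -/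
open MeasureTheory
open scoped RealInnerProductSpace

/-!
Test the equation with `φ u`, where `φ = exp (-l ψ)` and `l = b₀ / (2 (M² + 1))`. Integrating by
parts, `∫ f φ u = ∫ φ (ε ‖∇u‖² - ε l u ⟪∇ψ, ∇u⟫ + (l / 2) u² ⟪β, ∇ψ⟫ - (u² / 2) div β)`: the
weight turns the convection term into a reaction term of size at least `(l / 2) b₀ u²`, which
absorbs the cross term, so the integrand dominates `φ (ε / 2 ‖∇u‖² + (l b₀ / 4) u²)`. Young's
inequality on `f φ u` and the bounds `m ^ l ≤ φ ≤ E ^ l` then give the estimate with a constant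
in which `ε` does not appear.
-/

section FiniteDimensional

variable {E F : Type*} [NormedAddCommGroup E] [NormedSpace ℝ E] [FiniteDimensional ℝ E]
  [MeasurableSpace E] [BorelSpace E] {μ : Measure E} [μ.IsAddHaarMeasure]
  [NormedAddCommGroup F] [NormedSpace ℝ F]

theorem integral_fderiv_eq_zero {W : E → F} (hW : ContDiff ℝ 1 W) (hcs : HasCompactSupport W) :
    ∫ x, fderiv ℝ W x ∂μ = 0 := by
  have hint : Integrable (fderiv ℝ W) μ :=
    (hW.continuous_fderiv one_ne_zero).integrable_of_hasCompactSupport (hcs.fderiv (𝕜 := ℝ))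
  ext v
  rw [ContinuousLinearMap.integral_apply (𝕜 := ℝ) hint]
  simpa using integral_smul_fderiv_eq_neg_fderiv_smul_of_integrable (𝕜 := ℝ) (μ := μ) (v := v)
    (f := fun _ => (1 : ℝ)) (g := W) (by simp) (by simpa using hint.apply_continuousLinearMap v)
    (by simpa using hW.continuous.integrable_of_hasCompactSupport hcs)
    (fun x _ => differentiableAt_const _) (fun x _ => hW.differentiable one_ne_zero x)

variable (E) in
noncomputable def traceCLM : (E →L[ℝ] E) →L[ℝ] ℝ :=
  LinearMap.toContinuousLinearMap (LinearMap.trace ℝ E ∘ₗ ContinuousLinearMap.coeLM ℝ)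

end FiniteDimensional

section Gradient

variable {F : Type*} [NormedAddCommGroup F] [InnerProductSpace ℝ F] [CompleteSpace F]
  {u : F → ℝ}

theorem gradient_of_notMem_tsupport_s6 {x : F} (h : x ∉ tsupport u) : gradient u x = 0 := by
  simp [gradient, fderiv_of_notMem_tsupport ℝ h]

theorem tsupport_gradient_subset : tsupport (gradient u) ⊆ tsupport u :=
  (tsupport_comp_subset (g := (InnerProductSpace.toDual ℝ F).symm) (map_zero _) _).trans
    (tsupport_fderiv_subset ℝ)

theorem ContDiff.gradient {n : WithTop ℕ∞} (hu : ContDiff ℝ (n + 1) u) :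
    ContDiff ℝ n (gradient u) :=
  (InnerProductSpace.toDual ℝ F).symm.contDiff.comp (hu.fderiv_right le_rfl)

end Gradient

section Divergence

variable {d : ℕ} {W : EuclideanSpace ℝ (Fin d) → EuclideanSpace ℝ (Fin d)}

theorem vecDiv_eq_traceCLM (W : EuclideanSpace ℝ (Fin d) → EuclideanSpace ℝ (Fin d)) :
    vecDiv W = fun x => traceCLM _ (fderiv ℝ W x) :=
  rfl

theorem vecDiv_of_notMem_tsupport {x : EuclideanSpace ℝ (Fin d)} (h : x ∉ tsupport W) :
    vecDiv W x = 0 := by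
  simp [vecDiv, fderiv_of_notMem_tsupport ℝ h]

theorem continuous_vecDiv_s6 (hW : ContDiff ℝ 1 W) : Continuous (vecDiv W) :=
  (traceCLM _).continuous.comp (hW.continuous_fderiv one_ne_zero)

theorem HasCompactSupport.vecDiv (hW : HasCompactSupport W) : HasCompactSupport (vecDiv W) :=
  (hW.fderiv (𝕜 := ℝ)).comp_left (g := traceCLM _) (map_zero _)

theorem integral_vecDiv_eq_zero (hW : ContDiff ℝ 1 W) (hcs : HasCompactSupport W) :
    ∫ x, vecDiv W x = 0 := by
  have hint : Integrable (fderiv ℝ W) :=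
    (hW.continuous_fderiv one_ne_zero).integrable_of_hasCompactSupport (hcs.fderiv (𝕜 := ℝ))
  rw [vecDiv_eq_traceCLM, (traceCLM _).integral_comp_comm hint, integral_fderiv_eq_zero hW hcs,
    map_zero]

theorem integrable_vecDiv (hW : ContDiff ℝ 1 W) (hcs : HasCompactSupport W) :
    Integrable (vecDiv W) :=
  (continuous_vecDiv_s6 hW).integrable_of_hasCompactSupport hcs.vecDiv

theorem vecDiv_smul {g : EuclideanSpace ℝ (Fin d) → ℝ} {x : EuclideanSpace ℝ (Fin d)}
    (hg : DifferentiableAt ℝ g x) (hW : DifferentiableAt ℝ W x) :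
    vecDiv (fun y => g y • W y) x = fderiv ℝ g x (W x) + g x * vecDiv W x := by
  simp [vecDiv, fderiv_fun_smul hg hW, add_comm]

theorem lap_of_notMem_tsupport {u : EuclideanSpace ℝ (Fin d) → ℝ} {x : EuclideanSpace ℝ (Fin d)}
    (h : x ∉ tsupport u) : lap u x = 0 :=
  vecDiv_of_notMem_tsupport fun hx => h (tsupport_gradient_subset hx)

theorem weighted_energy_identity {β : EuclideanSpace ℝ (Fin d) → EuclideanSpace ℝ (Fin d)}
    {u φ : EuclideanSpace ℝ (Fin d) → ℝ} {ε : ℝ} {x : EuclideanSpace ℝ (Fin d)}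
    (hβ : DifferentiableAt ℝ β x) (hu : ContDiff ℝ 2 u) (hφ : DifferentiableAt ℝ φ x) :
    (-ε * lap u x + ⟪β x, gradient u x⟫) * (φ x * u x) =
      ε * (φ x * ‖gradient u x‖ ^ 2) + ε * u x * fderiv ℝ φ x (gradient u x)
        - u x ^ 2 / 2 * (fderiv ℝ φ x (β x) + φ x * vecDiv β x)
        + vecDiv (fun y => (φ y * u y ^ 2) • β y) x / 2
        - vecDiv (fun y => (ε * (φ y * u y)) • gradient u y) x := by
  have hux : DifferentiableAt ℝ u x := hu.differentiable two_ne_zero x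
  have hux2 : DifferentiableAt ℝ (fun y => u y ^ 2) x := hux.pow 2
  have hφu : DifferentiableAt ℝ (fun y => φ y * u y) x := hφ.mul hux
  rw [vecDiv_smul (by fun_prop) hβ,
    vecDiv_smul (by fun_prop) (hu.gradient.differentiable one_ne_zero x),
    fderiv_fun_mul hφ hux2, fderiv_fun_pow 2 hux, fderiv_const_mul hφu, fderiv_fun_mul hφ hux]
  simp only [add_apply, FunLike.coe_smul, Pi.smul_apply, smul_eq_mul,
    ← inner_gradient_left, real_inner_self_eq_norm_sq, lap, real_inner_comm (β x)]
  ring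

end Divergence

theorem fderiv_exp_neg_mul {F : Type*} [NormedAddCommGroup F] [NormedSpace ℝ F] {ψ : F → ℝ}
    {x : F} (hψ : DifferentiableAt ℝ ψ x) (l : ℝ) :
    fderiv ℝ (fun y => Real.exp (-l * ψ y)) x = (-l * Real.exp (-l * ψ x)) • fderiv ℝ ψ x := by
  rw [((hψ.hasFDerivAt.const_mul (-l)).exp).fderiv, smul_smul, mul_comm]

theorem rpow_le_exp_neg_mul_le_rpow {m E l t : ℝ} (hm : 0 ≤ m) (hl : 0 ≤ l)
    (h : m ≤ Real.exp (-t) ∧ Real.exp (-t) ≤ E) :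
    m ^ l ≤ Real.exp (-l * t) ∧ Real.exp (-l * t) ≤ E ^ l := by
  rw [show -l * t = -t * l by ring, Real.exp_mul]
  exact ⟨Real.rpow_le_rpow hm h.1 hl, Real.rpow_le_rpow (Real.exp_pos _).le h.2 hl⟩

-- The pointwise form of the weighted energy, with `a = ‖∇u‖`, `s = u`, `p = ⟪∇ψ, ∇u⟫`,
-- `b = ⟪β, ∇ψ⟫` and `δ = div β`.
theorem coercivity_bound {ε l M b₀ a s p b δ : ℝ} (hε : 0 ≤ ε) (hε1 : ε ≤ 1) (hl : 0 ≤ l)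
    (hlM : l * M ^ 2 ≤ b₀ / 2) (hp : |p| ≤ M * a) (hb : b₀ ≤ b) (hδ : δ ≤ 0) :
    ε / 2 * a ^ 2 + l * b₀ / 4 * s ^ 2 ≤
      ε * a ^ 2 - ε * l * s * p + l / 2 * s ^ 2 * b - s ^ 2 / 2 * δ := by
  have hb₀ : 0 ≤ b₀ := by nlinarith [mul_nonneg hl (sq_nonneg M)]
  have hsp : s * p ≤ |s| * (M * a) :=
    calc s * p ≤ |s * p| := le_abs_self _
      _ = |s| * |p| := abs_mul s p
      _ ≤ |s| * (M * a) := mul_le_mul_of_nonneg_left hp (abs_nonneg s)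
  have hlMs : (l * M * |s|) ^ 2 ≤ l * b₀ / 2 * s ^ 2 := by
    have : (l * M * |s|) ^ 2 = l * M ^ 2 * (l * s ^ 2) := by rw [mul_pow, mul_pow, sq_abs]; ring
    rw [this]
    nlinarith [mul_le_mul_of_nonneg_right hlM (mul_nonneg hl (sq_nonneg s))]
  have hamgm : l * s * p ≤ a ^ 2 / 2 + l * b₀ / 4 * s ^ 2 := by
    nlinarith [sq_nonneg (a - l * M * |s|), mul_le_mul_of_nonneg_left hsp hl, hlMs]
  nlinarith [mul_le_mul_of_nonneg_left hamgm hε, mul_le_mul_of_nonneg_left hb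
    (mul_nonneg hl (sq_nonneg s)), mul_nonpos_of_nonneg_of_nonpos (sq_nonneg s) hδ,
    mul_nonneg (sub_nonneg.2 hε1) (mul_nonneg (mul_nonneg hl hb₀) (sq_nonneg s))]

theorem mul_mul_le_young {c K φ F s : ℝ} (hc : 0 < c) (hφ : 0 ≤ φ) (hφK : φ ≤ K) :
    F * (φ * s) ≤ K / (2 * c) * F ^ 2 + c / 2 * (φ * s ^ 2) := by
  have hyoung : F * s ≤ F ^ 2 / (2 * c) + c / 2 * s ^ 2 := by
    have hsq : F ^ 2 / (2 * c) + c / 2 * s ^ 2 - F * s = (F - c * s) ^ 2 / (2 * c) := by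
      field_simp; ring
    linarith [hsq, div_nonneg (sq_nonneg (F - c * s)) (by positivity : (0 : ℝ) ≤ 2 * c)]
  calc F * (φ * s) = φ * (F * s) := by ring
    _ ≤ φ * (F ^ 2 / (2 * c) + c / 2 * s ^ 2) := mul_le_mul_of_nonneg_left hyoung hφ
    _ = φ * (F ^ 2 / (2 * c)) + c / 2 * (φ * s ^ 2) := by ring
    _ ≤ K * (F ^ 2 / (2 * c)) + c / 2 * (φ * s ^ 2) := by gcongr
    _ = K / (2 * c) * F ^ 2 + c / 2 * (φ * s ^ 2) := by ring

theorem mul_min_mul_le {μ φ c A B : ℝ} (hμ : μ ≤ φ) (hφ : 0 ≤ φ) (hc : 0 ≤ c) (hA : 0 ≤ A)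
    (hB : 0 ≤ B) : μ * min 1 c / 2 * (A + B) ≤ φ * (A / 2 + c / 2 * B) := by
  have hμφ : μ * min 1 c ≤ φ * min 1 c := mul_le_mul_of_nonneg_right hμ (le_min zero_le_one hc)
  have h1 := hμφ.trans (mul_le_of_le_one_right hφ (min_le_left _ _))
  have h2 := hμφ.trans (mul_le_mul_of_nonneg_left (min_le_right _ _) hφ)
  nlinarith [mul_le_mul_of_nonneg_right h1 hA, mul_le_mul_of_nonneg_right h2 hB]

section Stability

variable {d : ℕ} {Ω : Set (EuclideanSpace ℝ (Fin d))}
  {β : EuclideanSpace ℝ (Fin d) → EuclideanSpace ℝ (Fin d)} {ψ u : EuclideanSpace ℝ (Fin d) → ℝ}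
  {b₀ M m E l ε : ℝ}

theorem weighted_energy_estimate_pointwise (hβ : ContDiff ℝ 1 β) (hψ : ContDiff ℝ 1 ψ)
    (hu : ContDiff ℝ 2 u) (hsupp : tsupport u ⊆ Ω) (hdiv : ∀ x ∈ Ω, vecDiv β x ≤ 0)
    (hb : ∀ x ∈ Ω, b₀ ≤ ⟪β x, gradient ψ x⟫) (hM : ∀ x ∈ Ω, ‖gradient ψ x‖ ≤ M)
    (hmE : ∀ x ∈ Ω, m ≤ Real.exp (-ψ x) ∧ Real.exp (-ψ x) ≤ E) (hm : 0 ≤ m)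
    (hb₀ : 0 < b₀) (hl : 0 < l) (hlM : l * M ^ 2 ≤ b₀ / 2) (hε : 0 < ε) (hε1 : ε ≤ 1)
    (x : EuclideanSpace ℝ (Fin d)) :
    m ^ l * min 1 (l * b₀ / 4) / 2 * (ε * ‖gradient u x‖ ^ 2 + u x ^ 2) ≤
      E ^ l / (2 * (l * b₀ / 4)) * (-ε * lap u x + ⟪β x, gradient u x⟫) ^ 2
        - vecDiv (fun y => (Real.exp (-l * ψ y) * u y ^ 2) • β y) x / 2
        + vecDiv (fun y => (ε * (Real.exp (-l * ψ y) * u y)) • gradient u y) x := by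
  have hψx : DifferentiableAt ℝ ψ x := hψ.differentiable one_ne_zero x
  have hid := weighted_energy_identity (ε := ε) (hβ.differentiable one_ne_zero x) hu
    ((hψx.const_mul (-l)).exp)
  simp only [fderiv_exp_neg_mul hψx, FunLike.coe_smul, Pi.smul_apply, smul_eq_mul,
    ← inner_gradient_left, real_inner_comm (β x)] at hid
  by_cases hx : x ∈ Ω
  · have hφ := Real.exp_pos (-l * ψ x)
    obtain ⟨hφm, hφE⟩ := rpow_le_exp_neg_mul_le_rpow hm hl.le (hmE x hx)
    have hcoer := coercivity_bound (a := ‖gradient u x‖) (s := u x)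
      (p := ⟪gradient ψ x, gradient u x⟫) hε.le hε1 hl.le hlM
      ((abs_real_inner_le_norm _ _).trans (mul_le_mul_of_nonneg_right (hM x hx) (norm_nonneg _)))
      (hb x hx) (hdiv x hx)
    have hc : 0 < l * b₀ / 4 := by positivity
    have hyoung := mul_mul_le_young (F := -ε * lap u x + ⟪β x, gradient u x⟫) (s := u x) hc
      hφ.le hφE
    have hmin := mul_min_mul_le hφm hφ.le hc.le
      (mul_nonneg hε.le (sq_nonneg ‖gradient u x‖)) (sq_nonneg (u x))
    nlinarith [mul_le_mul_of_nonneg_left hcoer hφ.le]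
  · have hxu : x ∉ tsupport u := fun h => hx (hsupp h)
    simp only [image_eq_zero_of_notMem_tsupport hxu, gradient_of_notMem_tsupport_s6 hxu,
      lap_of_notMem_tsupport hxu, inner_zero_right, norm_zero] at hid ⊢
    linarith

theorem weighted_energy_estimate (hβ : ContDiff ℝ 1 β) (hψ : ContDiff ℝ 1 ψ)
    (hu : ContDiff ℝ 2 u) (hcs : HasCompactSupport u)
    (hsupp : tsupport u ⊆ Ω) (hdiv : ∀ x ∈ Ω, vecDiv β x ≤ 0)
    (hb : ∀ x ∈ Ω, b₀ ≤ ⟪β x, gradient ψ x⟫) (hM : ∀ x ∈ Ω, ‖gradient ψ x‖ ≤ M)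
    (hmE : ∀ x ∈ Ω, m ≤ Real.exp (-ψ x) ∧ Real.exp (-ψ x) ≤ E) (hm : 0 ≤ m)
    (hb₀ : 0 < b₀) (hl : 0 < l) (hlM : l * M ^ 2 ≤ b₀ / 2) (hε : 0 < ε) (hε1 : ε ≤ 1) :
    m ^ l * min 1 (l * b₀ / 4) / 2 * (ε * (∫ x, ‖gradient u x‖ ^ 2) + ∫ x, u x ^ 2) ≤
      E ^ l / (2 * (l * b₀ / 4)) * ∫ x, (-ε * lap u x + ⟪β x, gradient u x⟫) ^ 2 := by
  set W₁ := fun y => (Real.exp (-l * ψ y) * u y ^ 2) • β y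
  set W₂ := fun y => (ε * (Real.exp (-l * ψ y) * u y)) • gradient u y
  have hG : ContDiff ℝ 1 (gradient u) := hu.gradient
  have hW₁ : ContDiff ℝ 1 W₁ :=
    ((contDiff_const.mul hψ).exp.mul ((hu.of_le one_le_two).pow 2)).smul hβ
  have hW₂ : ContDiff ℝ 1 W₂ :=
    (contDiff_const.mul ((contDiff_const.mul hψ).exp.mul (hu.of_le one_le_two))).smul hG
  have hW₁c : HasCompactSupport W₁ :=
    .intro hcs fun x hx => by simp [W₁, image_eq_zero_of_notMem_tsupport hx]
  have hW₂c : HasCompactSupport W₂ :=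
    .intro hcs fun x hx => by simp [W₂, image_eq_zero_of_notMem_tsupport hx]
  have hint {g : EuclideanSpace ℝ (Fin d) → ℝ} (hg : Continuous g)
      (h0 : ∀ x ∉ tsupport u, g x = 0) : Integrable g :=
    hg.integrable_of_hasCompactSupport (.intro hcs h0)
  have hf2 : Integrable fun x => (-ε * lap u x + ⟪β x, gradient u x⟫) ^ 2 := by
    have hlap : Continuous (lap u) := continuous_vecDiv_s6 hG
    refine hint (by have := hG.continuous; fun_prop) fun x hx => ?_
    simp [gradient_of_notMem_tsupport_s6 hx, lap_of_notMem_tsupport hx]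
  have hgrad2 : Integrable fun x => ‖gradient u x‖ ^ 2 :=
    hint (by have := hG.continuous; fun_prop) fun x hx => by simp [gradient_of_notMem_tsupport_s6 hx]
  have hu2 : Integrable fun x => u x ^ 2 :=
    hint (by have := hu.continuous; fun_prop) fun x hx => by
      simp [image_eq_zero_of_notMem_tsupport hx]
  have hdiv₁ := integrable_vecDiv hW₁ hW₁c
  have hdiv₂ := integrable_vecDiv hW₂ hW₂c
  calc m ^ l * min 1 (l * b₀ / 4) / 2 * (ε * (∫ x, ‖gradient u x‖ ^ 2) + ∫ x, u x ^ 2)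
      = ∫ x, m ^ l * min 1 (l * b₀ / 4) / 2 * (ε * ‖gradient u x‖ ^ 2 + u x ^ 2) := by
        rw [integral_const_mul, integral_add (hgrad2.const_mul ε) hu2, integral_const_mul]
    _ ≤ ∫ x, (E ^ l / (2 * (l * b₀ / 4)) * (-ε * lap u x + ⟪β x, gradient u x⟫) ^ 2
          - vecDiv W₁ x / 2 + vecDiv W₂ x) :=
        integral_mono (((hgrad2.const_mul ε).add hu2).const_mul _)
          (((hf2.const_mul _).sub (hdiv₁.div_const 2)).add hdiv₂)
          (weighted_energy_estimate_pointwise hβ hψ hu hsupp hdiv hb hM hmE hm hb₀ hl hlM hε hε1)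
    _ = E ^ l / (2 * (l * b₀ / 4)) * ∫ x, (-ε * lap u x + ⟪β x, gradient u x⟫) ^ 2 := by
        rw [integral_add, integral_sub, integral_const_mul, integral_div,
          integral_vecDiv_eq_zero hW₁ hW₁c, integral_vecDiv_eq_zero hW₂ hW₂c]
        · ring
        exacts [hf2.const_mul _, hdiv₁.div_const 2, (hf2.const_mul _).sub (hdiv₁.div_const 2),
          hdiv₂]

end Stability

theorem convection_diffusion_stability_general
    (b₀ M m E : ℝ) (hb₀ : 0 < b₀) (hm : 0 < m) (hmE : m ≤ E) :
    ∃ C : ℝ, 0 ≤ C ∧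
      ∀ (d : ℕ) (Ω : Set (EuclideanSpace ℝ (Fin d)))
        (β : EuclideanSpace ℝ (Fin d) → EuclideanSpace ℝ (Fin d))
        (ψ : EuclideanSpace ℝ (Fin d) → ℝ),
        IsOpen Ω → ContDiff ℝ 1 β → (∀ x ∈ Ω, vecDiv β x ≤ 0) →
        ContDiff ℝ 1 ψ →
        (∀ x ∈ Ω, b₀ ≤ ⟪β x, gradient ψ x⟫) →
        (∀ x ∈ Ω, ‖gradient ψ x‖ ≤ M) →
        (∀ x ∈ Ω, m ≤ Real.exp (-ψ x) ∧ Real.exp (-ψ x) ≤ E) →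
        ∀ ε : ℝ, 0 < ε → ε ≤ 1 →
        ∀ u : EuclideanSpace ℝ (Fin d) → ℝ, ContDiff ℝ 2 u →
          HasCompactSupport u → tsupport u ⊆ Ω →
          ε * (∫ x, ‖gradient u x‖ ^ 2) + (∫ x, (u x) ^ 2) ≤
            C * ∫ x, (-ε * lap u x + ⟪β x, gradient u x⟫) ^ 2 := by
  set l := b₀ / (2 * (M ^ 2 + 1))
  have hl : 0 < l := by positivity
  have hlM : l * M ^ 2 ≤ b₀ / 2 := by
    rw [div_mul_eq_mul_div, div_le_div_iff₀ (by positivity) two_pos]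
    nlinarith
  have hE : 0 < E := hm.trans_le hmE
  have hc₁ : 0 < m ^ l * min 1 (l * b₀ / 4) / 2 := by positivity
  refine ⟨E ^ l / (2 * (l * b₀ / 4)) / (m ^ l * min 1 (l * b₀ / 4) / 2), by positivity, ?_⟩
  intro d Ω β ψ _ hβ hdiv hψ hb hM hmE ε hε hε1 u hu hcs hsupp
  rw [div_mul_eq_mul_div, le_div_iff₀ hc₁, mul_comm]
  exact weighted_energy_estimate hβ hψ hu hcs hsupp hdiv hb hM hmE hm.le hb₀ hl hlM hε hε1

/-- ε-uniform a priori stability of the convection-dominated diffusion problem: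
there is a constant `C ≥ 0` depending only on `b₀, M, m, E` such that, under the
standing assumptions (`div β ≤ 0`, `⟨β, ∇ψ⟩ ≥ b₀ > 0`, `‖∇ψ‖ ≤ M`,
`m ≤ exp(−ψ) ≤ E` on `Ω`), for every `0 < ε ≤ 1` and every `C²` function `u`
compactly supported in `Ω`, setting `f = −ε·Δu + ⟨β, ∇u⟩`, one has
`ε·∫ ‖∇u‖² + ∫ u² ≤ C·∫ f²`. -/
theorem convection_diffusion_stability
    (b₀ M m E : ℝ) (hb₀ : 0 < b₀) (hM : 0 ≤ M) (hm : 0 < m) (hmE : m ≤ E) :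
    ∃ C : ℝ, 0 ≤ C ∧
      ∀ (d : ℕ) (Ω : Set (EuclideanSpace ℝ (Fin d)))
        (β : EuclideanSpace ℝ (Fin d) → EuclideanSpace ℝ (Fin d))
        (ψ : EuclideanSpace ℝ (Fin d) → ℝ),
        IsOpen Ω → ContDiff ℝ 1 β → (∀ x ∈ Ω, vecDiv β x ≤ 0) →
        ContDiff ℝ 1 ψ →
        (∀ x ∈ Ω, b₀ ≤ ⟪β x, gradient ψ x⟫) →
        (∀ x ∈ Ω, ‖gradient ψ x‖ ≤ M) →
        (∀ x ∈ Ω, m ≤ Real.exp (-ψ x) ∧ Real.exp (-ψ x) ≤ E) →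
        ∀ ε : ℝ, 0 < ε → ε ≤ 1 →
        ∀ u : EuclideanSpace ℝ (Fin d) → ℝ, ContDiff ℝ 2 u →
          HasCompactSupport u → tsupport u ⊆ Ω →
          ε * (∫ x, ‖gradient u x‖ ^ 2) + (∫ x, (u x) ^ 2) ≤
            C * ∫ x, (-ε * lap u x + ⟪β x, gradient u x⟫) ^ 2 :=
  convection_diffusion_stability_general b₀ M m E hb₀ hm hmE
end
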